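/- (Key integral estimate in the comparison proof.) Assume (A1): ∫_{|z|>1} μ(dz) < ∞, sup_x ∫_{|z|≤1}|j(x,z)|² μ(dz) < ∞, and for all x,y: ∫_{ℝ^d}|j(x,z)−j(y,z)|² μ(dz) ≤ c̄|x−y|² and ∫_{|z|>1}|j(x,z)−j(y,z)| μ(dz) ≤ c̄|x−y|. Let u:ℝ^d→ℝ be bounded usc, v:ℝ^d→ℝ bounded lsc, let ψ:ℝ^d→ℝ be bounded and C², let ε>0, and suppose (x̄,ȳ) is a global maximum point of (x,y) ↦ u(x) − v(y) − |x−y|²/(2ε) − ψ(x). Set q := (x̄−ȳ)/ε and p := q + ∇ψ(x̄). Then for every δ∈(0,1): I^{2,δ}[x̄,p,u] ≤ I^{2,δ}[ȳ,q,v] + (c̄/ε)|x̄−ȳ|² + c̄|q||x̄−ȳ| + I^{2,δ}[x̄,∇ψ(x̄),ψ]. -/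

import Mathlib

open scoped RealInnerProductSpace
open Filter Metric MeasureTheory Topology

/-- The large-jumps part `I^{2,δ}[x,p,w]` of the Lévy–Itô operator. -/
noncomputable def I2 {d : ℕ} (μ : Measure (EuclideanSpace ℝ (Fin d)))
    (j : EuclideanSpace ℝ (Fin d) → EuclideanSpace ℝ (Fin d) → EuclideanSpace ℝ (Fin d))
    (δ : ℝ) (x p : EuclideanSpace ℝ (Fin d)) (w : EuclideanSpace ℝ (Fin d) → ℝ) : ℝ :=
  ∫ z in {z : EuclideanSpace ℝ (Fin d) | δ < ‖z‖},
    (w (x + j x z) - w x -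
      ⟪p, j x z⟫ * (closedBall (0 : EuclideanSpace ℝ (Fin d)) 1).indicator (fun _ => (1:ℝ)) z) ∂μ


set_option maxHeartbeats 1000000 in
theorem statement17_aux {E : Type*} [NormedAddCommGroup E] [InnerProductSpace ℝ E]
    [MeasurableSpace E] [BorelSpace E] [SecondCountableTopology E]
    (μ : Measure E)
    (hLevy : ∫⁻ z, ENNReal.ofReal (min (‖z‖ ^ 2) 1) ∂μ < ⊤)
    (cb : ℝ) (hcb : 0 < cb)
    (j : E → E → E) (hjm : Measurable (Function.uncurry j))
    (hjb : ∀ x z, ‖j x z‖ ≤ cb * ‖z‖)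
    (u v ψ : E → ℝ) (hum : Measurable u) (hvm : Measurable v) (hψm : Measurable ψ)
    (Cu Cv Cψ : ℝ) (hCu : ∀ x, |u x| ≤ Cu) (hCv : ∀ x, |v x| ≤ Cv) (hCψ : ∀ x, |ψ x| ≤ Cψ)
    (ε : ℝ) (hε : 0 < ε) (xm ym : E)
    (hA1c : ∫⁻ z, ENNReal.ofReal (‖j xm z - j ym z‖ ^ 2) ∂μ ≤
      ENNReal.ofReal (cb * ‖xm - ym‖ ^ 2))
    (hA1d : ∫⁻ z in {z : E | 1 < ‖z‖}, ENNReal.ofReal ‖j xm z - j ym z‖ ∂μ ≤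
      ENNReal.ofReal (cb * ‖xm - ym‖))
    (hmax : ∀ x y, u x - v y - ‖x - y‖ ^ 2 / (2 * ε) - ψ x ≤
      u xm - v ym - ‖xm - ym‖ ^ 2 / (2 * ε) - ψ xm)
    (q p g : E) (hq : q = (1 / ε) • (xm - ym)) (hp : p = q + g)
    (δ : ℝ) (hδ0 : 0 < δ) (hδ1 : δ < 1) :
    ∫ z in {z : E | δ < ‖z‖},
        (u (xm + j xm z) - u xm -
          ⟪p, j xm z⟫ * (closedBall (0 : E) 1).indicator (fun _ => (1:ℝ)) z) ∂μ ≤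
      (∫ z in {z : E | δ < ‖z‖},
        (v (ym + j ym z) - v ym -
          ⟪q, j ym z⟫ * (closedBall (0 : E) 1).indicator (fun _ => (1:ℝ)) z) ∂μ) +
      (cb / ε) * ‖xm - ym‖ ^ 2 + cb * ‖q‖ * ‖xm - ym‖ +
      ∫ z in {z : E | δ < ‖z‖},
        (ψ (xm + j xm z) - ψ xm -
          ⟪g, j xm z⟫ * (closedBall (0 : E) 1).indicator (fun _ => (1:ℝ)) z) ∂μ := by
  set S : Set E := {z | δ < ‖z‖} with hSdef
  set T : Set E := {z : E | 1 < ‖z‖} with hTdef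
  have hSmeas : MeasurableSet S := (isOpen_lt continuous_const continuous_norm).measurableSet
  have hTmeas : MeasurableSet T := (isOpen_lt continuous_const continuous_norm).measurableSet
  have hTS : T ⊆ S := fun z hz => lt_trans hδ1 hz
  -- finiteness of μ S
  have hμS : μ S < ⊤ := by
    have h1 : ENNReal.ofReal (δ ^ 2) * μ S ≤ ∫⁻ z, ENNReal.ofReal (min (‖z‖ ^ 2) 1) ∂μ := by
      rw [← MeasureTheory.setLIntegral_const]
      refine le_trans (MeasureTheory.setLIntegral_mono (by measurability) ?_)
        (MeasureTheory.setLIntegral_le_lintegral _ _)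
      intro z hz
      refine ENNReal.ofReal_le_ofReal (le_min ?_ ?_)
      · exact pow_le_pow_left₀ hδ0.le (le_of_lt hz) 2
      · nlinarith
    rcases eq_top_or_lt_top (μ S) with h | h
    · exfalso
      rw [h, ENNReal.mul_top (ENNReal.ofReal_pos.mpr (by positivity)).ne'] at h1
      exact hLevy.ne (top_le_iff.mp h1)
    · exact h
  haveI : IsFiniteMeasure (μ.restrict S) := ⟨by rwa [Measure.restrict_apply_univ]⟩
  -- measurability
  have hjax : Measurable fun z => j xm z := hjm.comp measurable_prodMk_left
  have hjay : Measurable fun z => j ym z := hjm.comp measurable_prodMk_left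
  have hχm : Measurable ((closedBall (0 : E) 1).indicator (fun _ => (1:ℝ))) :=
    measurable_const.indicator measurableSet_closedBall
  -- bound on the inner-product-times-indicator term
  have hind : ∀ (r : E) (a : E → E), (∀ z, ‖a z‖ ≤ cb * ‖z‖) → ∀ z,
      |⟪r, a z⟫ * (closedBall (0 : E) 1).indicator (fun _ => (1:ℝ)) z| ≤ ‖r‖ * cb := by
    intro r a ha z
    by_cases hz : z ∈ closedBall (0 : E) 1
    · rw [Set.indicator_of_mem hz, mul_one]
      have hz1 : ‖z‖ ≤ 1 := by rwa [mem_closedBall, dist_zero_right] at hz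
      calc |⟪r, a z⟫| ≤ ‖r‖ * ‖a z‖ := abs_real_inner_le_norm r _
        _ ≤ ‖r‖ * (cb * ‖z‖) := by
            exact mul_le_mul_of_nonneg_left (ha z) (norm_nonneg r)
        _ ≤ ‖r‖ * cb := by nlinarith [mul_nonneg (norm_nonneg r) hcb.le]
    · rw [Set.indicator_of_notMem hz, mul_zero, abs_zero]
      positivity
  -- integrability of the three integrands
  have hfuM : Measurable fun z =>
      u (xm + j xm z) - u xm - ⟪p, j xm z⟫ * (closedBall (0 : E) 1).indicator (fun _ => (1:ℝ)) z :=
    ((hum.comp (measurable_const.add hjax)).sub measurable_const).sub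
      ((measurable_const.inner hjax).mul hχm)
  have hfvM : Measurable fun z =>
      v (ym + j ym z) - v ym - ⟪q, j ym z⟫ * (closedBall (0 : E) 1).indicator (fun _ => (1:ℝ)) z :=
    ((hvm.comp (measurable_const.add hjay)).sub measurable_const).sub
      ((measurable_const.inner hjay).mul hχm)
  have hfψM : Measurable fun z =>
      ψ (xm + j xm z) - ψ xm - ⟪g, j xm z⟫ * (closedBall (0 : E) 1).indicator (fun _ => (1:ℝ)) z :=
    ((hψm.comp (measurable_const.add hjax)).sub measurable_const).sub
      ((measurable_const.inner hjax).mul hχm)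
  have hbd : ∀ (w : E → ℝ) (Cw : ℝ), (∀ x, |w x| ≤ Cw) → ∀ (r : E) (a : E → E),
      (∀ z, ‖a z‖ ≤ cb * ‖z‖) → ∀ x0 z,
      ‖w (x0 + a z) - w x0 - ⟪r, a z⟫ * (closedBall (0 : E) 1).indicator (fun _ => (1:ℝ)) z‖ ≤
        Cw + Cw + ‖r‖ * cb := by
    intro w Cw hCw r a ha x0 z
    have h1 := abs_le.mp (hCw (x0 + a z))
    have h2 := abs_le.mp (hCw x0)
    have h3 := abs_le.mp (hind r a ha z)
    rw [Real.norm_eq_abs, abs_le]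
    constructor <;> linarith
  have hfuI : Integrable (fun z =>
      u (xm + j xm z) - u xm - ⟪p, j xm z⟫ * (closedBall (0 : E) 1).indicator (fun _ => (1:ℝ)) z)
      (μ.restrict S) :=
    (integrable_const (Cu + Cu + ‖p‖ * cb)).mono' hfuM.aestronglyMeasurable
      (Filter.Eventually.of_forall (hbd u Cu hCu p (fun z => j xm z) (hjb xm) xm))
  have hfvI : Integrable (fun z =>
      v (ym + j ym z) - v ym - ⟪q, j ym z⟫ * (closedBall (0 : E) 1).indicator (fun _ => (1:ℝ)) z)
      (μ.restrict S) :=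
    (integrable_const (Cv + Cv + ‖q‖ * cb)).mono' hfvM.aestronglyMeasurable
      (Filter.Eventually.of_forall (hbd v Cv hCv q (fun z => j ym z) (hjb ym) ym))
  have hfψI : Integrable (fun z =>
      ψ (xm + j xm z) - ψ xm - ⟪g, j xm z⟫ * (closedBall (0 : E) 1).indicator (fun _ => (1:ℝ)) z)
      (μ.restrict S) :=
    (integrable_const (Cψ + Cψ + ‖g‖ * cb)).mono' hfψM.aestronglyMeasurable
      (Filter.Eventually.of_forall (hbd ψ Cψ hCψ g (fun z => j xm z) (hjb xm) xm))
  -- the quadratic correction term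
  have hquadM : Measurable fun z => ‖j xm z - j ym z‖ ^ 2 := (hjax.sub hjay).norm.pow_const 2
  have hquadI : Integrable (fun z => ‖j xm z - j ym z‖ ^ 2) (μ.restrict S) := by
    refine ⟨hquadM.aestronglyMeasurable, ?_⟩
    rw [MeasureTheory.hasFiniteIntegral_iff_ofReal (Filter.Eventually.of_forall fun z => by positivity)]
    exact lt_of_le_of_lt (le_trans (MeasureTheory.setLIntegral_le_lintegral _ _) hA1c)
      ENNReal.ofReal_lt_top
  have hquadB : ∫ z in S, ‖j xm z - j ym z‖ ^ 2 ∂μ ≤ cb * ‖xm - ym‖ ^ 2 := by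
    rw [MeasureTheory.integral_eq_lintegral_of_nonneg_ae
      (Filter.Eventually.of_forall fun z => by positivity) hquadM.aestronglyMeasurable]
    exact ENNReal.toReal_le_of_le_ofReal (by positivity)
      (le_trans (MeasureTheory.setLIntegral_le_lintegral _ _) hA1c)
  -- the linear correction term, supported on T
  have hlinM : Measurable fun z => ‖j xm z - j ym z‖ := (hjax.sub hjay).norm
  have hlinI : Integrable (fun z => ‖j xm z - j ym z‖) (μ.restrict T) := by
    refine ⟨hlinM.aestronglyMeasurable, ?_⟩
    rw [MeasureTheory.hasFiniteIntegral_iff_ofReal (Filter.Eventually.of_forall fun z => by positivity)]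
    exact lt_of_le_of_lt hA1d ENNReal.ofReal_lt_top
  have hlinB : ∫ z in T, ‖j xm z - j ym z‖ ∂μ ≤ cb * ‖xm - ym‖ := by
    rw [MeasureTheory.integral_eq_lintegral_of_nonneg_ae
      (Filter.Eventually.of_forall fun z => by positivity) hlinM.aestronglyMeasurable]
    exact ENNReal.toReal_le_of_le_ofReal (by positivity) hA1d
  -- the indicator part of G
  have hGindI : Integrable (fun z => T.indicator (fun z => ‖q‖ * ‖j xm z - j ym z‖) z)
      (μ.restrict S) := by
    rw [MeasureTheory.integrable_indicator_iff hTmeas, MeasureTheory.IntegrableOn,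
      Measure.restrict_restrict hTmeas, Set.inter_eq_left.mpr hTS]
    exact hlinI.const_mul ‖q‖
  have hGindB : ∫ z in S, T.indicator (fun z => ‖q‖ * ‖j xm z - j ym z‖) z ∂μ ≤
      cb * ‖q‖ * ‖xm - ym‖ := by
    rw [MeasureTheory.integral_indicator hTmeas, Measure.restrict_restrict hTmeas,
      Set.inter_eq_left.mpr hTS, MeasureTheory.integral_const_mul]
    calc ‖q‖ * ∫ z in T, ‖j xm z - j ym z‖ ∂μ ≤ ‖q‖ * (cb * ‖xm - ym‖) :=
          mul_le_mul_of_nonneg_left hlinB (norm_nonneg q)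
      _ = cb * ‖q‖ * ‖xm - ym‖ := by ring
  have hGI : Integrable (fun z => T.indicator (fun z => ‖q‖ * ‖j xm z - j ym z‖) z +
      ‖j xm z - j ym z‖ ^ 2 / (2 * ε)) (μ.restrict S) :=
    hGindI.add (hquadI.div_const _)
  -- the pointwise inequality
  have hpt : ∀ z,
      u (xm + j xm z) - u xm - ⟪p, j xm z⟫ * (closedBall (0 : E) 1).indicator (fun _ => (1:ℝ)) z ≤
      (v (ym + j ym z) - v ym - ⟪q, j ym z⟫ * (closedBall (0 : E) 1).indicator (fun _ => (1:ℝ)) z) +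
      (ψ (xm + j xm z) - ψ xm - ⟪g, j xm z⟫ * (closedBall (0 : E) 1).indicator (fun _ => (1:ℝ)) z) +
      (T.indicator (fun z => ‖q‖ * ‖j xm z - j ym z‖) z + ‖j xm z - j ym z‖ ^ 2 / (2 * ε)) := by
    intro z
    have hsum : xm + j xm z - (ym + j ym z) = xm - ym + (j xm z - j ym z) := by abel
    have hkey := hmax (xm + j xm z) (ym + j ym z)
    rw [hsum, norm_add_sq_real] at hkey
    have hinner : ⟪xm - ym, j xm z - j ym z⟫ = ε * ⟪q, j xm z - j ym z⟫ := by
      rw [hq, real_inner_smul_left]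
      field_simp
    have hpq : ⟪p, j xm z⟫ = ⟪q, j xm z⟫ + ⟪g, j xm z⟫ := by rw [hp, inner_add_left]
    have hqab : ⟪q, j xm z - j ym z⟫ = ⟪q, j xm z⟫ - ⟪q, j ym z⟫ := inner_sub_right q _ _
    have hdiv : (‖xm - ym‖ ^ 2 + 2 * (ε * ⟪q, j xm z - j ym z⟫) + ‖j xm z - j ym z‖ ^ 2) / (2 * ε)
        = ‖xm - ym‖ ^ 2 / (2 * ε) + ⟪q, j xm z - j ym z⟫ + ‖j xm z - j ym z‖ ^ 2 / (2 * ε) := by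
      field_simp
    rw [hinner, hdiv] at hkey
    by_cases hz : z ∈ closedBall (0 : E) 1
    · have hz1 : ‖z‖ ≤ 1 := by rwa [mem_closedBall, dist_zero_right] at hz
      have hzT : z ∉ T := by simp only [hTdef, Set.mem_setOf_eq, not_lt]; exact hz1
      simp only [Set.indicator_of_mem hz, Set.indicator_of_notMem hzT, mul_one, zero_add]
      linarith [hkey, hqab, hpq]
    · have hz1 : 1 < ‖z‖ := by
        rw [mem_closedBall, dist_zero_right, not_le] at hz; exact hz
      have hzT : z ∈ T := hz1
      simp only [Set.indicator_of_mem hzT, Set.indicator_of_notMem hz, mul_zero]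
      have hcs := real_inner_le_norm q (j xm z - j ym z)
      linarith [hkey, hcs]
  -- put everything together
  have harith : cb * ‖xm - ym‖ ^ 2 / (2 * ε) ≤ cb / ε * ‖xm - ym‖ ^ 2 := by
    have heq : cb / ε * ‖xm - ym‖ ^ 2 - cb * ‖xm - ym‖ ^ 2 / (2 * ε) =
        cb * ‖xm - ym‖ ^ 2 / (2 * ε) := by field_simp; ring
    nlinarith [div_nonneg (by positivity : (0:ℝ) ≤ cb * ‖xm - ym‖ ^ 2) (by positivity : (0:ℝ) ≤ 2 * ε)]
  have hstep1 : ∫ z in S, (u (xm + j xm z) - u xm -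
        ⟪p, j xm z⟫ * (closedBall (0 : E) 1).indicator (fun _ => (1:ℝ)) z) ∂μ
      ≤ ∫ z in S, ((v (ym + j ym z) - v ym -
          ⟪q, j ym z⟫ * (closedBall (0 : E) 1).indicator (fun _ => (1:ℝ)) z) +
        (ψ (xm + j xm z) - ψ xm -
          ⟪g, j xm z⟫ * (closedBall (0 : E) 1).indicator (fun _ => (1:ℝ)) z) +
        (T.indicator (fun z => ‖q‖ * ‖j xm z - j ym z‖) z +
          ‖j xm z - j ym z‖ ^ 2 / (2 * ε))) ∂μ :=
    MeasureTheory.integral_mono hfuI ((hfvI.add hfψI).add hGI) hpt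
  have hstep2 : ∫ z in S, ((v (ym + j ym z) - v ym -
          ⟪q, j ym z⟫ * (closedBall (0 : E) 1).indicator (fun _ => (1:ℝ)) z) +
        (ψ (xm + j xm z) - ψ xm -
          ⟪g, j xm z⟫ * (closedBall (0 : E) 1).indicator (fun _ => (1:ℝ)) z) +
        (T.indicator (fun z => ‖q‖ * ‖j xm z - j ym z‖) z +
          ‖j xm z - j ym z‖ ^ 2 / (2 * ε))) ∂μ
      = (∫ z in S, (v (ym + j ym z) - v ym -
          ⟪q, j ym z⟫ * (closedBall (0 : E) 1).indicator (fun _ => (1:ℝ)) z) ∂μ) +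
        (∫ z in S, (ψ (xm + j xm z) - ψ xm -
          ⟪g, j xm z⟫ * (closedBall (0 : E) 1).indicator (fun _ => (1:ℝ)) z) ∂μ) +
        ((∫ z in S, T.indicator (fun z => ‖q‖ * ‖j xm z - j ym z‖) z ∂μ) +
         (∫ z in S, ‖j xm z - j ym z‖ ^ 2 / (2 * ε) ∂μ)) := by
    exact (MeasureTheory.integral_add (hfvI.add hfψI) hGI).trans (by
      simp only [Pi.add_apply, MeasureTheory.integral_add hfvI hfψI,
        MeasureTheory.integral_add hGindI (hquadI.div_const _)])
  have hquad2 : ∫ z in S, ‖j xm z - j ym z‖ ^ 2 / (2 * ε) ∂μ ≤ cb * ‖xm - ym‖ ^ 2 / (2 * ε) := by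
    rw [MeasureTheory.integral_div]
    exact div_le_div_of_nonneg_right hquadB (by positivity)
  refine le_trans hstep1 (le_trans (le_of_eq hstep2) ?_)
  linarith [hGindB, hquad2, harith]

/-- key integral estimate in the proof of the comparison principle. -/
theorem statement17 {d : ℕ} (μ : Measure (EuclideanSpace ℝ (Fin d)))
    (hLevy : ∫⁻ z, ENNReal.ofReal (min (‖z‖ ^ 2) 1) ∂μ < ⊤)
    (cb : ℝ) (hcb : 0 < cb)
    (j : EuclideanSpace ℝ (Fin d) → EuclideanSpace ℝ (Fin d) → EuclideanSpace ℝ (Fin d))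
    (hjm : Measurable (Function.uncurry j))
    (hjb : ∀ x z, ‖j x z‖ ≤ cb * ‖z‖)
    -- (A1)
    (hA1a : μ {z : EuclideanSpace ℝ (Fin d) | 1 < ‖z‖} < ⊤)
    (hA1b : ∃ C : ℝ, ∀ x, ∫⁻ z in {z : EuclideanSpace ℝ (Fin d) | ‖z‖ ≤ 1},
      ENNReal.ofReal (‖j x z‖ ^ 2) ∂μ ≤ ENNReal.ofReal C)
    (hA1c : ∀ x y, ∫⁻ z, ENNReal.ofReal (‖j x z - j y z‖ ^ 2) ∂μ ≤
      ENNReal.ofReal (cb * ‖x - y‖ ^ 2))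
    (hA1d : ∀ x y, ∫⁻ z in {z : EuclideanSpace ℝ (Fin d) | 1 < ‖z‖},
      ENNReal.ofReal ‖j x z - j y z‖ ∂μ ≤ ENNReal.ofReal (cb * ‖x - y‖))
    (u v : EuclideanSpace ℝ (Fin d) → ℝ)
    (hu : UpperSemicontinuous u) (hub : ∃ C, ∀ x, |u x| ≤ C)
    (hv : LowerSemicontinuous v) (hvb : ∃ C, ∀ x, |v x| ≤ C)
    (ψ : EuclideanSpace ℝ (Fin d) → ℝ) (hψ : ContDiff ℝ 2 ψ) (hψb : ∃ C, ∀ y, |ψ y| ≤ C)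
    (ε : ℝ) (hε : 0 < ε)
    (xm ym : EuclideanSpace ℝ (Fin d))
    (hmax : ∀ x y, u x - v y - ‖x - y‖ ^ 2 / (2 * ε) - ψ x ≤
      u xm - v ym - ‖xm - ym‖ ^ 2 / (2 * ε) - ψ xm)
    (q p : EuclideanSpace ℝ (Fin d))
    (hq : q = (1 / ε) • (xm - ym)) (hp : p = q + gradient ψ xm) :
    ∀ δ : ℝ, 0 < δ → δ < 1 →
      I2 μ j δ xm p u ≤ I2 μ j δ ym q v + (cb / ε) * ‖xm - ym‖ ^ 2 +
        cb * ‖q‖ * ‖xm - ym‖ + I2 μ j δ xm (gradient ψ xm) ψ := by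
  obtain ⟨Cu, hCu⟩ := hub
  obtain ⟨Cv, hCv⟩ := hvb
  obtain ⟨Cψ, hCψ⟩ := hψb
  intro δ hδ0 hδ1
  unfold I2
  exact statement17_aux μ hLevy cb hcb j hjm hjb u v ψ hu.measurable hv.measurable
    hψ.continuous.measurable Cu Cv Cψ hCu hCv hCψ ε hε xm ym (hA1c xm ym) (hA1d xm ym)
    hmax q p (gradient ψ xm) hq hp δ hδ0 hδ1
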